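/- Let Γ ∪ {A} be a set of PML formulas containing no classical and no intuitionistic variables. Then Γ ⊢_(i) A if and only if Γ ⊢_(m) A. -/

import Mathlib

namespace PML

/-- The three kinds of propositional variables: minimal, intuitionistic, classical. -/
inductive Kind : Type
  | m | i | c
deriving DecidableEq

/-- Formulas of propositional mixed logic (PML). -/
inductive Formula : Type
  | var : Kind → ℕ → Formula
  | bot : Formula
  | and : Formula → Formula → Formula
  | or : Formula → Formula → Formula
  | imp : Formula → Formula → Formula
deriving DecidableEq

namespace Formula

/-- ¬A abbreviates A → ⊥. -/
def neg (A : Formula) : Formula := imp A bot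

/-- All variables occurring in the formula have a kind satisfying `p`. -/
def onlyKinds (p : Kind → Prop) : Formula → Prop
  | var k _ => p k
  | bot => True
  | and A B => onlyKinds p A ∧ onlyKinds p B
  | or A B => onlyKinds p A ∧ onlyKinds p B
  | imp A B => onlyKinds p A ∧ onlyKinds p B

/-- A classical formula: only classical variables. -/
def IsClassical (A : Formula) : Prop := onlyKinds (fun k => k = Kind.c) A

/-- An intuitionistic formula: only intuitionistic and classical variables. -/
def IsIntuitionistic (A : Formula) : Prop := onlyKinds (fun k => k = Kind.i ∨ k = Kind.c) A

/-- A formula without classical variables. -/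
def NoClassicalVar (A : Formula) : Prop := onlyKinds (fun k => k ≠ Kind.c) A

/-- A formula without classical and without intuitionistic variables. -/
def OnlyMinimalVar (A : Formula) : Prop := onlyKinds (fun k => k = Kind.m) A

/-- A formula without intuitionistic variables. -/
def NoIntuitVar (A : Formula) : Prop := onlyKinds (fun k => k ≠ Kind.i) A

/-- Substitution of the formula `F` for every occurrence of the variable of kind `k`, index `n`. -/
def subst (F : Formula) (k : Kind) (n : ℕ) : Formula → Formula
  | var k' n' => if k' = k ∧ n' = n then F else var k' n'
  | bot => bot
  | and A B => and (subst F k n A) (subst F k n B)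
  | or A B => or (subst F k n A) (subst F k n B)
  | imp A B => imp (subst F k n A) (subst F k n B)

end Formula

/-- Which optional rules are available: the intuitionistic absurdity rule (⊥_i),
the classical absurdity rule (⊥_c), and whether (∨_E) is unrestricted
(`fullOrE = false` gives the PML^∨ restriction). -/
structure Rules where
  botI : Bool
  botC : Bool
  fullOrE : Bool

/-- Natural deduction for mixed logic, parametrized by the available rules. -/
inductive Deriv (R : Rules) : Set Formula → Formula → Prop
  | ax (A : Formula) : Deriv R {A} A
  | weak {Γ : Set Formula} {A : Formula} (B : Formula) : Deriv R Γ A → Deriv R (insert B Γ) A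
  | andI {Γ₁ Γ₂ : Set Formula} {A₁ A₂ : Formula} :
      Deriv R Γ₁ A₁ → Deriv R Γ₂ A₂ → Deriv R (Γ₁ ∪ Γ₂) (A₁.and A₂)
  | andE₁ {Γ : Set Formula} {A₁ A₂ : Formula} : Deriv R Γ (A₁.and A₂) → Deriv R Γ A₁
  | andE₂ {Γ : Set Formula} {A₁ A₂ : Formula} : Deriv R Γ (A₁.and A₂) → Deriv R Γ A₂
  | orI₁ {Γ : Set Formula} {A₁ : Formula} (A₂ : Formula) : Deriv R Γ A₁ → Deriv R Γ (A₁.or A₂)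
  | orI₂ {Γ : Set Formula} {A₂ : Formula} (A₁ : Formula) : Deriv R Γ A₂ → Deriv R Γ (A₁.or A₂)
  | orE {Γ₁ Γ₂ Γ₃ : Set Formula} {A₁ A₂ B : Formula} :
      (R.fullOrE = true ∨ ((A₁.or A₂).IsClassical → B.IsClassical)) →
      Deriv R Γ₁ (A₁.or A₂) → Deriv R (insert A₁ Γ₂) B → Deriv R (insert A₂ Γ₃) B →
      Deriv R (Γ₁ ∪ Γ₂ ∪ Γ₃) B
  | impI {Γ : Set Formula} {A₁ A₂ : Formula} : Deriv R (insert A₁ Γ) A₂ → Deriv R Γ (A₁.imp A₂)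
  | impE {Γ₁ Γ₂ : Set Formula} {A₁ A₂ : Formula} :
      Deriv R Γ₁ (A₁.imp A₂) → Deriv R Γ₂ A₁ → Deriv R (Γ₁ ∪ Γ₂) A₂
  | botI {Γ : Set Formula} {A : Formula} :
      R.botI = true → A.IsIntuitionistic → Deriv R Γ Formula.bot → Deriv R Γ A
  | botC {Γ : Set Formula} {A : Formula} :
      R.botC = true → A.IsClassical → Deriv R Γ (A.neg.neg) → Deriv R Γ A

/-- Γ ⊢_pml A : full mixed logic. -/
def DerivPML : Set Formula → Formula → Prop := Deriv ⟨true, true, true⟩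

/-- Γ ⊢_(i) A : derivable without the rule (⊥_c). -/
def DerivI : Set Formula → Formula → Prop := Deriv ⟨true, false, true⟩

/-- Γ ⊢_(m) A : derivable without the rules (⊥_i) and (⊥_c). -/
def DerivM : Set Formula → Formula → Prop := Deriv ⟨false, false, true⟩

/-- Γ ⊢_(i') A : derivable without the rule (⊥_i). -/
def DerivI' : Set Formula → Formula → Prop := Deriv ⟨false, true, true⟩

/-- Γ ⊢^∨ A : derivable in PML^∨ (restricted ∨-elimination). -/
def DerivVee : Set Formula → Formula → Prop := Deriv ⟨true, true, false⟩

/-- A Kripke frame over a poset `W`: a monotone forcing relation on atoms. -/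
structure KripkeFrame (W : Type) [PartialOrder W] where
  fvar : W → Kind → ℕ → Prop
  fbot : W → Prop
  mono_var : ∀ {a b : W} (k : Kind) (n : ℕ), a ≤ b → fvar a k n → fvar b k n
  mono_bot : ∀ {a b : W}, a ≤ b → fbot a → fbot b

variable {W : Type} [PartialOrder W]

/-- Forcing, extended to compound formulas. -/
def KripkeFrame.force (M : KripkeFrame W) : W → Formula → Prop
  | a, .var k n => M.fvar a k n
  | a, .bot => M.fbot a
  | a, .and A B => M.force a A ∧ M.force a B
  | a, .or A B => M.force a A ∨ M.force a B
  | a, .imp A B => ∀ b : W, a ≤ b → M.force b A → M.force b B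

/-- A formula is valid in a model iff it is forced at every node. -/
def KripkeFrame.Valid (M : KripkeFrame W) (A : Formula) : Prop := ∀ a : W, M.force a A

/-- A mixed Kripke model: (2) a node forcing ⊥ forces every intuitionistic or classical
variable; (3) a classical variable forced at a node not forcing ⊥ is forced everywhere. -/
def IsMixed (M : KripkeFrame W) : Prop :=
  (∀ (a : W) (k : Kind) (n : ℕ), M.fbot a → (k = Kind.i ∨ k = Kind.c) → M.fvar a k n) ∧
  (∀ (a : W) (n : ℕ), M.fvar a Kind.c n → ¬ M.fbot a → ∀ b : W, M.fvar b Kind.c n)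

/-- An intuitionistic mixed Kripke model: restricted to atoms in 𝒱_m ∪ 𝒱_i ∪ {⊥}
(no classical atom is forced) and a node forcing ⊥ forces every intuitionistic variable. -/
def IsIntMixed (M : KripkeFrame W) : Prop :=
  (∀ (a : W) (n : ℕ), ¬ M.fvar a Kind.c n) ∧
  (∀ (a : W) (n : ℕ), M.fbot a → M.fvar a Kind.i n)

/-- A minimal mixed Kripke model: restricted to atoms in 𝒱_m ∪ {⊥}. -/
def IsMinMixed (M : KripkeFrame W) : Prop :=
  (∀ (a : W) (n : ℕ), ¬ M.fvar a Kind.i n) ∧ (∀ (a : W) (n : ℕ), ¬ M.fvar a Kind.c n)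

/-- Semantic entailment: every mixed Kripke model validating all of Γ validates A. -/
def Entails (Γ : Set Formula) (A : Formula) : Prop :=
  ∀ (W : Type) [PartialOrder W] [Nonempty W] (M : KripkeFrame W),
    IsMixed M → (∀ B ∈ Γ, M.Valid B) → M.Valid A

/-- A saturated set of formulas. -/
def Saturated (Δ : Set Formula) : Prop :=
  ∀ C D : Formula, DerivPML Δ (C.or D) → C ∈ Δ ∨ D ∈ Δ

/-- The restriction 𝒦_(i) of a model to atoms in 𝒱_m ∪ 𝒱_i ∪ {⊥}. -/
def KripkeFrame.restrictI (M : KripkeFrame W) : KripkeFrame W where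
  fvar a k n := k ≠ Kind.c ∧ M.fvar a k n
  fbot := M.fbot
  mono_var := by
    intro a b k n hab h
    exact ⟨h.1, M.mono_var k n hab h.2⟩
  mono_bot := fun hab h => M.mono_bot hab h

/-- The restriction 𝒦_(m) of a model to atoms in 𝒱_m ∪ {⊥}. -/
def KripkeFrame.restrictM (M : KripkeFrame W) : KripkeFrame W where
  fvar a k n := k = Kind.m ∧ M.fvar a k n
  fbot := M.fbot
  mono_var := by
    intro a b k n hab h
    exact ⟨h.1, M.mono_var k n hab h.2⟩
  mono_bot := fun hab h => M.mono_bot hab h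

/-- The translation ^m : intuitionistic variables X_i are sent to ¬¬ m(X_i). -/
def Formula.transM (m : ℕ → ℕ) : Formula → Formula
  | .var Kind.i n => ((Formula.var Kind.m (m n)).neg).neg
  | .var k n => .var k n
  | .bot => .bot
  | .and A B => .and (Formula.transM m A) (Formula.transM m B)
  | .or A B => .or (Formula.transM m A) (Formula.transM m B)
  | .imp A B => .imp (Formula.transM m A) (Formula.transM m B)

/-- The translation ^i : classical variables X_c are sent to ¬¬ i(X_c), and
disjunctions are doubly negated. -/
def Formula.transI (f : ℕ → ℕ) : Formula → Formula
  | .var Kind.c n => ((Formula.var Kind.i (f n)).neg).neg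
  | .var k n => .var k n
  | .bot => .bot
  | .and A B => .and (Formula.transI f A) (Formula.transI f B)
  | .or A B => (((Formula.transI f A).or (Formula.transI f B)).neg).neg
  | .imp A B => .imp (Formula.transI f A) (Formula.transI f B)

end PML

/-!
Erase every intuitionistic and classical variable to `⊥`. The erasure commutes with the
connectives, so it sends each rule instance to an instance of the same rule, except (⊥_i).
But the erasure of an intuitionistic formula follows from `⊥` in minimal logic (its atoms
become `⊥`, and an implication only needs its conclusion), so (⊥_i) becomes a cut.
Formulas with only minimal variables are fixed by the erasure.
-/

namespace PML

def Formula.toMin : Formula → Formula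
  | .var Kind.m n => .var Kind.m n
  | .var Kind.i _ => .bot
  | .var Kind.c _ => .bot
  | .bot => .bot
  | .and A B => .and A.toMin B.toMin
  | .or A B => .or A.toMin B.toMin
  | .imp A B => .imp A.toMin B.toMin

theorem Formula.toMin_eq_self {A : Formula} (h : A.OnlyMinimalVar) : A.toMin = A := by
  induction A with
  | var k n => cases k <;> simp_all [OnlyMinimalVar, onlyKinds, toMin]
  | bot => rfl
  | and A B ihA ihB => exact congrArg₂ _ (ihA h.1) (ihB h.2)
  | or A B ihA ihB => exact congrArg₂ _ (ihA h.1) (ihB h.2)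
  | imp A B ihA ihB => exact congrArg₂ _ (ihA h.1) (ihB h.2)

theorem Formula.image_toMin_eq_self {Γ : Set Formula} (h : ∀ B ∈ Γ, B.OnlyMinimalVar) :
    toMin '' Γ = Γ :=
  Set.EqOn.image_eq_self fun B hB => toMin_eq_self (h B hB)

namespace Deriv

variable {R : Rules}

theorem cut {Γ : Set Formula} {A B : Formula} (hB : Deriv R Γ B) (hA : Deriv R {B} A) :
    Deriv R Γ A := by
  have hImp : Deriv R ∅ (B.imp A) := impI (by simpa using hA)
  simpa using impE hImp hB

theorem toMin_of_bot {A : Formula} (h : A.IsIntuitionistic) : Deriv R {Formula.bot} A.toMin := by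
  induction A with
  | var k n =>
    cases k
    · simp [Formula.IsIntuitionistic, Formula.onlyKinds] at h
    · exact ax _
    · exact ax _
  | bot => exact ax _
  | and A B ihA ihB => simpa [Formula.toMin] using andI (ihA h.1) (ihB h.2)
  | or A B ihA _ => exact orI₁ _ (ihA h.1)
  | imp A B _ ihB => exact impI (weak _ (ihB h.2))

theorem mono {R' : Rules} (hI : R.botI = true → R'.botI = true)
    (hC : R.botC = true → R'.botC = true) (hOr : R.fullOrE = true → R'.fullOrE = true)
    {Γ : Set Formula} {A : Formula} (h : Deriv R Γ A) : Deriv R' Γ A := by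
  induction h with
  | ax A => exact ax A
  | weak B _ ih => exact weak B ih
  | andI _ _ ih₁ ih₂ => exact andI ih₁ ih₂
  | andE₁ _ ih => exact andE₁ ih
  | andE₂ _ ih => exact andE₂ ih
  | orI₁ A₂ _ ih => exact orI₁ A₂ ih
  | orI₂ A₁ _ ih => exact orI₂ A₁ ih
  | orE hside _ _ _ ih₁ ih₂ ih₃ => exact orE (hside.imp_left hOr) ih₁ ih₂ ih₃
  | impI _ ih => exact impI ih
  | impE _ _ ih₁ ih₂ => exact impE ih₁ ih₂
  | botI hb hA _ ih => exact botI (hI hb) hA ih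
  | botC hb hA _ ih => exact botC (hC hb) hA ih

theorem toMin {R' : Rules} (hC : R.botC = false) (hOr : R'.fullOrE = true) {Γ : Set Formula}
    {A : Formula} (h : Deriv R Γ A) : Deriv R' (Formula.toMin '' Γ) A.toMin := by
  induction h with
  | ax A => simpa using ax A.toMin
  | weak B _ ih => simpa [Set.image_insert_eq] using weak B.toMin ih
  | andI _ _ ih₁ ih₂ => simpa [Set.image_union, Formula.toMin] using andI ih₁ ih₂
  | andE₁ _ ih => exact andE₁ ih
  | andE₂ _ ih => exact andE₂ ih
  | orI₁ A₂ _ ih => exact orI₁ _ ih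
  | orI₂ A₁ _ ih => exact orI₂ _ ih
  | orE _ _ _ _ ih₁ ih₂ ih₃ =>
    simpa [Set.image_union] using orE (Or.inl hOr) ih₁
      (by simpa [Set.image_insert_eq] using ih₂) (by simpa [Set.image_insert_eq] using ih₃)
  | impI _ ih => exact impI (by simpa [Set.image_insert_eq] using ih)
  | impE _ _ ih₁ ih₂ => simpa [Set.image_union] using impE ih₁ ih₂
  | botI _ hA _ ih => exact cut ih (toMin_of_bot hA)
  | botC hb => simp [hC] at hb

end Deriv

theorem DerivM.derivI {Γ : Set Formula} {A : Formula} (h : DerivM Γ A) : DerivI Γ A :=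
  Deriv.mono (R := ⟨false, false, true⟩) (R' := ⟨true, false, true⟩) (fun _ => rfl) id id h

end PML

/-- For Γ ∪ {A} without classical and intuitionistic variables, Γ ⊢_(i) A iff Γ ⊢_(m) A. -/
theorem PML.derivI_iff_derivM (Γ : Set PML.Formula) (A : PML.Formula)
    (hΓ : ∀ B ∈ Γ, B.OnlyMinimalVar) (hA : A.OnlyMinimalVar) :
    PML.DerivI Γ A ↔ PML.DerivM Γ A := by
  refine ⟨fun h => ?_, PML.DerivM.derivI⟩
  have hMin : PML.DerivM (PML.Formula.toMin '' Γ) A.toMin := PML.Deriv.toMin rfl rfl h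
  rwa [PML.Formula.image_toMin_eq_self hΓ, PML.Formula.toMin_eq_self hA] at hMin
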